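/- The A-module M is a free ℂ[t]-module with basis consisting of the elements z̄₁ⁿ·s₁, z̄₂ⁿ·s₂, z̄₁ⁿθ̄₁·s₁, z̄₂ⁿθ̄₂·s₂ for all n ≥ 0, together with the single element s₀. -/

import Mathlib

open MvPolynomial

noncomputable section

/-- The polynomial ring `ℂ[t,z₁,z₂,θ₁,θ₂]`:
variables `X 0 = t`, `X 1 = z₁`, `X 2 = z₂`, `X 3 = θ₁`, `X 4 = θ₂`. -/
abbrev P5 : Type := MvPolynomial (Fin 5) ℂ

/-- The ideal `(z₁z₂ + t², z₁θ₂ − tθ₁, z₂θ₁ + tθ₂, θ₁θ₂, θ₁², θ₂²)` of relations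
of Deligne's miniversal deformation of the NS node. -/
def nsIdeal : Ideal P5 :=
  Ideal.span {X 1 * X 2 + X 0 ^ 2, X 1 * X 4 - X 0 * X 3, X 2 * X 3 + X 0 * X 4,
    X 3 * X 4, X 3 ^ 2, X 4 ^ 2}

/-- The coordinate ring `A` of Deligne's miniversal deformation of the NS node. -/
abbrev ANode : Type := P5 ⧸ nsIdeal

/-- `t̄ ∈ A`. -/
def tb : ANode := Ideal.Quotient.mk nsIdeal (X 0)
/-- `z̄₁ ∈ A`. -/
def z1 : ANode := Ideal.Quotient.mk nsIdeal (X 1)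
/-- `z̄₂ ∈ A`. -/
def z2 : ANode := Ideal.Quotient.mk nsIdeal (X 2)
/-- `θ̄₁ ∈ A`. -/
def th1 : ANode := Ideal.Quotient.mk nsIdeal (X 3)
/-- `θ̄₂ ∈ A`. -/
def th2 : ANode := Ideal.Quotient.mk nsIdeal (X 4)

/-- `A` as a `ℂ[t]`-algebra via `t ↦ t̄`. -/
instance : Algebra (Polynomial ℂ) ANode := (Polynomial.aeval tb).toRingHom.toAlgebra


set_option synthInstance.maxHeartbeats 400000
set_option maxHeartbeats 1000000

/-- The standard generators of the free module `A³`. -/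
def ee (i : Fin 3) : Fin 3 → ANode := Pi.single i 1

/-- The relation vectors defining the local model `M` of the dualizing sheaf `ω_{X/S}`:
generators `s₁ = ee 0`, `s₂ = ee 1`, `s₀ = ee 2`; relations `z₁s₂ = ts₁`, `z₂s₁ = −ts₂`,
`θ₁s₂ = ts₀`, `θ₂s₁ = ts₀`, `z₁s₀ = θ₁s₁`, `z₂s₀ = −θ₂s₂`, `θ₁s₀ = 0`, `θ₂s₀ = 0`. -/
def omegaRels : Set (Fin 3 → ANode) :=
  { z1 • ee 1 - tb • ee 0,
    z2 • ee 0 + tb • ee 1,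
    th1 • ee 1 - tb • ee 2,
    th2 • ee 0 - tb • ee 2,
    z1 • ee 2 - th1 • ee 0,
    z2 • ee 2 + th2 • ee 1,
    th1 • ee 2,
    th2 • ee 2 }

/-- The submodule of relations. -/
def omegaRelMod : Submodule ANode (Fin 3 → ANode) := Submodule.span ANode omegaRels

/-- The local model `M` of the relative dualizing sheaf `ω_{X/S}`. -/
abbrev M : Type := (Fin 3 → ANode) ⧸ omegaRelMod

/-- The generators of `M`: `s 0 = s₁`, `s 1 = s₂`, `s 2 = s₀`. -/
def s (i : Fin 3) : M := Submodule.Quotient.mk (ee i)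

/-- Index type for the `ℂ[t]`-basis: `s₀`; `z̄₁ⁿ·s₁ (n ≥ 0)`; `z̄₂ⁿ·s₂ (n ≥ 0)`;
`z̄₁ⁿθ̄₁·s₁ (n ≥ 0)`; `z̄₂ⁿθ̄₂·s₂ (n ≥ 0)`. -/
abbrev BasisIdx : Type := Unit ⊕ ℕ ⊕ ℕ ⊕ ℕ ⊕ ℕ

/-- The claimed `ℂ[t]`-basis of `M`. -/
def mBasis : BasisIdx → M
  | Sum.inl _ => s 2
  | Sum.inr (Sum.inl n) => z1 ^ n • s 0
  | Sum.inr (Sum.inr (Sum.inl n)) => z2 ^ n • s 1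
  | Sum.inr (Sum.inr (Sum.inr (Sum.inl n))) => (z1 ^ n * th1) • s 0
  | Sum.inr (Sum.inr (Sum.inr (Sum.inr n))) => (z2 ^ n * th2) • s 1

/-!
The `ℂ[t]`-span of the proposed basis contains `s₀, s₁, s₂`, and the relations
`z₁z₂ = -t²`, `z₁θ₂ = tθ₁`, `z₂θ₁ = -tθ₂` of `A` together with those of `M` show that it is
stable under `z₁, z₂, θ₁, θ₂`; so it is an `A`-submodule, hence all of `M`.

For independence, `s₁ ↦ z₁, s₂ ↦ t, s₀ ↦ θ₁` is an `A`-linear map `M → A`, and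
`t ↦ t, z₁ ↦ T, z₂ ↦ -t²T⁻¹, θ₁ ↦ Tε, θ₂ ↦ tε` embeds `A` into the dual numbers over
`ℂ[t][T, T⁻¹]`. The composite sends the proposed basis to nonzero `ℂ[t]`-multiples of pairwise
distinct monomials `Tᵏ`, `Tᵏε`.
-/

open LaurentPolynomial TrivSqZeroExt DualNumber

theorem LinearIndependent.smul_of_ne_zero {ι R V : Type*} [Ring R] [NoZeroDivisors R]
    [AddCommGroup V] [Module R V] {v : ι → V} (hv : LinearIndependent R v) {w : ι → R}
    (hw : ∀ i, w i ≠ 0) : LinearIndependent R (w • v) := by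
  rw [linearIndependent_iff'] at hv ⊢
  intro t l hl i hi
  refine (mul_eq_zero.1 (hv t (fun j => l j * w j) ?_ i hi)).resolve_right (hw i)
  simpa only [Pi.smul_apply', mul_smul] using hl

theorem z1_mul_z2 : z1 * z2 = -tb ^ 2 := by
  rw [eq_neg_iff_add_eq_zero]
  exact Ideal.Quotient.eq_zero_iff_mem.2 (Ideal.subset_span (by simp))

theorem z1_mul_th2 : z1 * th2 = tb * th1 := by
  rw [← sub_eq_zero]
  exact Ideal.Quotient.eq_zero_iff_mem.2 (Ideal.subset_span (by simp))

theorem z2_mul_th1 : z2 * th1 = -(tb * th2) := by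
  rw [eq_neg_iff_add_eq_zero]
  exact Ideal.Quotient.eq_zero_iff_mem.2 (Ideal.subset_span (by simp))

theorem th1_mul_th2 : th1 * th2 = 0 :=
  Ideal.Quotient.eq_zero_iff_mem.2 (Ideal.subset_span (by simp))

theorem th1_mul_self : th1 * th1 = 0 := by
  rw [← sq]
  exact Ideal.Quotient.eq_zero_iff_mem.2 (Ideal.subset_span (by simp))

theorem th2_mul_self : th2 * th2 = 0 := by
  rw [← sq]
  exact Ideal.Quotient.eq_zero_iff_mem.2 (Ideal.subset_span (by simp))

theorem mk_eq_zero_of_mem_omegaRels {v : Fin 3 → ANode} (hv : v ∈ omegaRels) :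
    (Submodule.Quotient.mk v : M) = 0 :=
  (Submodule.Quotient.mk_eq_zero _).2 (Submodule.subset_span hv)

theorem z1_smul_s1 : z1 • s 1 = tb • s 0 := by
  simpa [s, sub_eq_zero, Submodule.Quotient.mk_smul] using
    mk_eq_zero_of_mem_omegaRels (v := z1 • ee 1 - tb • ee 0) (by simp [omegaRels])

theorem z2_smul_s0 : z2 • s 0 = -(tb • s 1) := by
  simpa [s, add_eq_zero_iff_eq_neg, Submodule.Quotient.mk_smul] using
    mk_eq_zero_of_mem_omegaRels (v := z2 • ee 0 + tb • ee 1) (by simp [omegaRels])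

theorem th1_smul_s1 : th1 • s 1 = tb • s 2 := by
  simpa [s, sub_eq_zero, Submodule.Quotient.mk_smul] using
    mk_eq_zero_of_mem_omegaRels (v := th1 • ee 1 - tb • ee 2) (by simp [omegaRels])

theorem th2_smul_s0 : th2 • s 0 = tb • s 2 := by
  simpa [s, sub_eq_zero, Submodule.Quotient.mk_smul] using
    mk_eq_zero_of_mem_omegaRels (v := th2 • ee 0 - tb • ee 2) (by simp [omegaRels])

theorem z1_smul_s2 : z1 • s 2 = th1 • s 0 := by
  simpa [s, sub_eq_zero, Submodule.Quotient.mk_smul] using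
    mk_eq_zero_of_mem_omegaRels (v := z1 • ee 2 - th1 • ee 0) (by simp [omegaRels])

theorem z2_smul_s2 : z2 • s 2 = -(th2 • s 1) := by
  simpa [s, add_eq_zero_iff_eq_neg, Submodule.Quotient.mk_smul] using
    mk_eq_zero_of_mem_omegaRels (v := z2 • ee 2 + th2 • ee 1) (by simp [omegaRels])

theorem th1_smul_s2 : th1 • s 2 = 0 := by
  simpa [s, Submodule.Quotient.mk_smul] using
    mk_eq_zero_of_mem_omegaRels (v := th1 • ee 2) (by simp [omegaRels])

theorem th2_smul_s2 : th2 • s 2 = 0 := by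
  simpa [s, Submodule.Quotient.mk_smul] using
    mk_eq_zero_of_mem_omegaRels (v := th2 • ee 2) (by simp [omegaRels])

theorem algebraMap_X_eq_tb : algebraMap (Polynomial ℂ) ANode Polynomial.X = tb :=
  Polynomial.aeval_X tb

def basisSpan : Submodule (Polynomial ℂ) M := Submodule.span (Polynomial ℂ) (Set.range mBasis)

theorem mBasis_mem (i : BasisIdx) : mBasis i ∈ basisSpan :=
  Submodule.subset_span ⟨i, rfl⟩

theorem tb_pow_smul_mBasis_mem (k : ℕ) (i : BasisIdx) : tb ^ k • mBasis i ∈ basisSpan := by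
  rw [← algebraMap_X_eq_tb, ← map_pow, algebraMap_smul]
  exact basisSpan.smul_mem _ (mBasis_mem i)

/- `smul_smul` fails to unify with the action of `A` on the quotient `M`, so products of scalars
are merged with `← smul_assoc, smul_eq_mul` instead. -/
theorem z1_smul_mBasis_mem (i : BasisIdx) : z1 • mBasis i ∈ basisSpan := by
  rcases i with _ | n | n | n | n
  · simpa [mBasis, z1_smul_s2] using mBasis_mem (.inr (.inr (.inr (.inl 0))))
  · simpa only [mBasis, ← smul_assoc, smul_eq_mul, pow_succ'] using mBasis_mem (.inr (.inl (n + 1)))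
  · rcases n with _ | n
    · simpa [mBasis, z1_smul_s1] using tb_pow_smul_mBasis_mem 1 (.inr (.inl 0))
    · have h : z1 * z2 ^ (n + 1) = -(tb ^ 2 * z2 ^ n) := by linear_combination z2 ^ n * z1_mul_z2
      simpa only [mBasis, ← smul_assoc, smul_eq_mul, h, neg_smul] using
        neg_mem (tb_pow_smul_mBasis_mem 2 (.inr (.inr (.inl n))))
  · simpa only [mBasis, ← smul_assoc, smul_eq_mul, pow_succ', mul_assoc] using
      mBasis_mem (.inr (.inr (.inr (.inl (n + 1)))))
  · rcases n with _ | n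
    · have h : z1 • th2 • s 1 = tb ^ 2 • s 2 := by
        rw [smul_smul z1 th2, z1_mul_th2, ← smul_smul tb th1, th1_smul_s1, smul_smul tb tb, ← sq]
      simpa [mBasis, h] using tb_pow_smul_mBasis_mem 2 (.inl ())
    · have h : z1 * (z2 ^ (n + 1) * th2) = -(tb ^ 2 * (z2 ^ n * th2)) := by
        linear_combination z2 ^ n * th2 * z1_mul_z2
      simpa only [mBasis, ← smul_assoc, smul_eq_mul, h, neg_smul] using
        neg_mem (tb_pow_smul_mBasis_mem 2 (.inr (.inr (.inr (.inr n)))))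

theorem z2_smul_mBasis_mem (i : BasisIdx) : z2 • mBasis i ∈ basisSpan := by
  rcases i with _ | n | n | n | n
  · simpa [mBasis, z2_smul_s2] using neg_mem (mBasis_mem (.inr (.inr (.inr (.inr 0)))))
  · rcases n with _ | n
    · simpa [mBasis, z2_smul_s0] using neg_mem (tb_pow_smul_mBasis_mem 1 (.inr (.inr (.inl 0))))
    · have h : z2 * z1 ^ (n + 1) = -(tb ^ 2 * z1 ^ n) := by linear_combination z1 ^ n * z1_mul_z2
      simpa only [mBasis, ← smul_assoc, smul_eq_mul, h, neg_smul] using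
        neg_mem (tb_pow_smul_mBasis_mem 2 (.inr (.inl n)))
  · simpa only [mBasis, ← smul_assoc, smul_eq_mul, pow_succ'] using
      mBasis_mem (.inr (.inr (.inl (n + 1))))
  · rcases n with _ | n
    · have h : z2 • th1 • s 0 = -(tb ^ 2 • s 2) := by
        rw [smul_smul z2 th1, z2_mul_th1, neg_smul, ← smul_smul tb th2, th2_smul_s0,
          smul_smul tb tb, ← sq]
      simpa [mBasis, h] using neg_mem (tb_pow_smul_mBasis_mem 2 (.inl ()))
    · have h : z2 * (z1 ^ (n + 1) * th1) = -(tb ^ 2 * (z1 ^ n * th1)) := by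
        linear_combination z1 ^ n * th1 * z1_mul_z2
      simpa only [mBasis, ← smul_assoc, smul_eq_mul, h, neg_smul] using
        neg_mem (tb_pow_smul_mBasis_mem 2 (.inr (.inr (.inr (.inl n)))))
  · simpa only [mBasis, ← smul_assoc, smul_eq_mul, pow_succ', mul_assoc] using
      mBasis_mem (.inr (.inr (.inr (.inr (n + 1)))))

theorem th1_smul_mBasis_mem (i : BasisIdx) : th1 • mBasis i ∈ basisSpan := by
  rcases i with _ | n | n | n | n
  · simp [mBasis, th1_smul_s2]
  · simpa only [mBasis, ← smul_assoc, smul_eq_mul, mul_comm th1] using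
      mBasis_mem (.inr (.inr (.inr (.inl n))))
  · rcases n with _ | n
    · simpa [mBasis, th1_smul_s1] using tb_pow_smul_mBasis_mem 1 (.inl ())
    · have h : th1 * z2 ^ (n + 1) = -(tb * (z2 ^ n * th2)) := by
        linear_combination z2 ^ n * z2_mul_th1
      simpa only [mBasis, pow_one, ← smul_assoc, smul_eq_mul, h, neg_smul] using
        neg_mem (tb_pow_smul_mBasis_mem 1 (.inr (.inr (.inr (.inr n)))))
  · have h : th1 * (z1 ^ n * th1) = 0 := by linear_combination z1 ^ n * th1_mul_self
    rw [mBasis, ← smul_assoc, smul_eq_mul, h]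
    exact (zero_smul ANode (s 0)).symm ▸ zero_mem _
  · have h : th1 * (z2 ^ n * th2) = 0 := by linear_combination z2 ^ n * th1_mul_th2
    rw [mBasis, ← smul_assoc, smul_eq_mul, h]
    exact (zero_smul ANode (s 1)).symm ▸ zero_mem _

theorem th2_smul_mBasis_mem (i : BasisIdx) : th2 • mBasis i ∈ basisSpan := by
  rcases i with _ | n | n | n | n
  · simp [mBasis, th2_smul_s2]
  · rcases n with _ | n
    · simpa [mBasis, th2_smul_s0] using tb_pow_smul_mBasis_mem 1 (.inl ())
    · have h : th2 * z1 ^ (n + 1) = tb * (z1 ^ n * th1) := by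
        linear_combination z1 ^ n * z1_mul_th2
      simpa only [mBasis, pow_one, ← smul_assoc, smul_eq_mul, h] using
        tb_pow_smul_mBasis_mem 1 (.inr (.inr (.inr (.inl n))))
  · simpa only [mBasis, ← smul_assoc, smul_eq_mul, mul_comm th2] using
      mBasis_mem (.inr (.inr (.inr (.inr n))))
  · have h : th2 * (z1 ^ n * th1) = 0 := by linear_combination z1 ^ n * th1_mul_th2
    rw [mBasis, ← smul_assoc, smul_eq_mul, h]
    exact (zero_smul ANode (s 0)).symm ▸ zero_mem _
  · have h : th2 * (z2 ^ n * th2) = 0 := by linear_combination z2 ^ n * th2_mul_self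
    rw [mBasis, ← smul_assoc, smul_eq_mul, h]
    exact (zero_smul ANode (s 1)).symm ▸ zero_mem _

theorem smul_mem_basisSpan_of_forall {a : ANode} (ha : ∀ i, a • mBasis i ∈ basisSpan) {y : M}
    (hy : y ∈ basisSpan) : a • y ∈ basisSpan :=
  (Submodule.span_le (p := basisSpan.comap (Algebra.lsmul (Polynomial ℂ) (Polynomial ℂ) M a))).2
    (Set.range_subset_iff.2 ha) hy

theorem mk_X_smul_mem_basisSpan (i : Fin 5) {y : M} (hy : y ∈ basisSpan) :
    Ideal.Quotient.mk nsIdeal (X i) • y ∈ basisSpan := by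
  fin_cases i
  · simpa [tb] using smul_mem_basisSpan_of_forall (tb_pow_smul_mBasis_mem 1) hy
  · exact smul_mem_basisSpan_of_forall z1_smul_mBasis_mem hy
  · exact smul_mem_basisSpan_of_forall z2_smul_mBasis_mem hy
  · exact smul_mem_basisSpan_of_forall th1_smul_mBasis_mem hy
  · exact smul_mem_basisSpan_of_forall th2_smul_mBasis_mem hy

theorem smul_mem_basisSpan (a : ANode) {y : M} (hy : y ∈ basisSpan) : a • y ∈ basisSpan := by
  obtain ⟨p, rfl⟩ := Ideal.Quotient.mk_surjective a
  induction p using MvPolynomial.induction_on generalizing y with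
  | C c =>
    rw [show Ideal.Quotient.mk nsIdeal (C c) = algebraMap (Polynomial ℂ) ANode (Polynomial.C c)
      from (Polynomial.aeval_C tb c).symm, algebraMap_smul]
    exact basisSpan.smul_mem (Polynomial.C c) hy
  | add p q hp hq =>
    rw [map_add, add_smul]
    exact add_mem (hp hy) (hq hy)
  | mul_X p i hp =>
    rw [map_mul, ← smul_smul]
    exact hp (mk_X_smul_mem_basisSpan i hy)

theorem span_range_s : Submodule.span ANode (Set.range s) = ⊤ := by
  have hs : s = omegaRelMod.mkQ ∘ Pi.basisFun ANode (Fin 3) := funext fun j => by simp [s, ee]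
  rw [hs, Set.range_comp, Submodule.span_image, (Pi.basisFun ANode (Fin 3)).span_eq,
    Submodule.map_top, Submodule.range_mkQ]

theorem s_mem_basisSpan (j : Fin 3) : s j ∈ basisSpan := by
  fin_cases j
  · simpa [mBasis] using mBasis_mem (.inr (.inl 0))
  · simpa [mBasis] using mBasis_mem (.inr (.inr (.inl 0)))
  · exact mBasis_mem (.inl ())

theorem span_mBasis_eq_top : Submodule.span (Polynomial ℂ) (Set.range mBasis) = ⊤ := by
  rw [eq_top_iff]
  rintro x -
  have hx : x ∈ Submodule.span ANode (Set.range s) := span_range_s ▸ Submodule.mem_top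
  induction hx using Submodule.span_induction with
  | mem _ hy => obtain ⟨j, rfl⟩ := hy; exact s_mem_basisSpan j
  | zero => exact zero_mem _
  | add _ _ _ _ hy hz => exact add_mem hy hz
  | smul a _ _ hy => exact smul_mem_basisSpan a hy

abbrev LaurentDual : Type := DualNumber (Polynomial ℂ)[T;T⁻¹]

def laurentT (n : ℤ) : LaurentDual := inl (T n)

theorem laurentT_mul_laurentT (m n : ℤ) : laurentT m * laurentT n = laurentT (m + n) := by
  rw [laurentT, laurentT, laurentT, ← inl_mul, T_add]

theorem laurentT_pow (m : ℤ) (n : ℕ) : laurentT m ^ n = laurentT (n * m) := by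
  rw [laurentT, laurentT, inl_pow, T_pow]

theorem laurentT_natCast (n : ℕ) : laurentT n = laurentT 1 ^ n := by
  rw [laurentT_pow, mul_one]

theorem laurentT_neg_natCast (n : ℕ) : laurentT (-n) = laurentT (-1) ^ n := by
  rw [laurentT_pow, mul_neg_one]

def laurentBasis : Module.Basis (ℤ ⊕ ℤ) (Polynomial ℂ) LaurentDual :=
  (AddMonoidAlgebra.basis ℤ (Polynomial ℂ)).prod (AddMonoidAlgebra.basis ℤ (Polynomial ℂ))

theorem laurentBasis_inl (k : ℤ) : laurentBasis (.inl k) = laurentT k :=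
  (Module.Basis.prod_apply _ _ _).trans rfl

theorem laurentBasis_inr (k : ℤ) : laurentBasis (.inr k) = laurentT k * ε := by
  refine (Module.Basis.prod_apply _ _ _).trans ?_
  change inr (T k) = inl (T k) * inr 1
  rw [inl_mul_inr, smul_eq_mul, mul_one]

local notation "τ" => algebraMap (Polynomial ℂ) LaurentDual Polynomial.X

def nodePoint : Fin 5 → LaurentDual :=
  ![τ, laurentT 1, -τ ^ 2 * laurentT (-1), laurentT 1 * ε, τ * ε]

def nodeEval : P5 →ₐ[ℂ] LaurentDual := aeval nodePoint

theorem nodeEval_eq_zero_of_mem {p : P5} (hp : p ∈ nsIdeal) : nodeEval p = 0 := by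
  have hT : laurentT 1 * laurentT (-1) = 1 := by
    rw [laurentT_mul_laurentT, add_neg_cancel, laurentT, T_zero, inl_one]
  have hε : (ε : LaurentDual) * ε = 0 := eps_mul_eps
  refine (Ideal.span_le (I := RingHom.ker nodeEval)).2 ?_ hp
  simp only [Set.insert_subset_iff, Set.singleton_subset_iff, SetLike.mem_coe, RingHom.mem_ker]
  simp only [nodeEval, map_add, map_sub, map_mul, map_pow, aeval_X, nodePoint, Matrix.cons_val]
  refine ⟨?_, ?_, ?_, ?_, ?_, ?_⟩
  · linear_combination (-τ ^ 2) * hT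
  · ring
  · linear_combination (-τ ^ 2 * (ε : LaurentDual)) * hT
  · linear_combination laurentT 1 * τ * hε
  · linear_combination laurentT 1 ^ 2 * hε
  · linear_combination τ ^ 2 * hε

def nodeEmbed : ANode →ₐ[ℂ] LaurentDual :=
  Ideal.Quotient.liftₐ nsIdeal nodeEval fun _ => nodeEval_eq_zero_of_mem

theorem nodeEmbed_mk_X (i : Fin 5) : nodeEmbed (Ideal.Quotient.mk nsIdeal (X i)) = nodePoint i :=
  aeval_X nodePoint i

theorem nodeEmbed_algebraMap (p : Polynomial ℂ) :
    nodeEmbed (algebraMap (Polynomial ℂ) ANode p) = algebraMap (Polynomial ℂ) LaurentDual p := by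
  change nodeEmbed (Polynomial.aeval tb p) = _
  rw [← Polynomial.aeval_algHom_apply, tb, nodeEmbed_mk_X]
  simp [nodePoint, Polynomial.aeval_algebraMap_apply]

def nodeEmbedCt : ANode →ₐ[Polynomial ℂ] LaurentDual :=
  { nodeEmbed with commutes' := nodeEmbed_algebraMap }

def omegaToANode : M →ₗ[ANode] ANode :=
  omegaRelMod.liftQ (Fintype.linearCombination ANode ![z1, tb, th1]) <| by
    rw [omegaRelMod, Submodule.span_le]
    simp only [omegaRels, Set.insert_subset_iff, Set.singleton_subset_iff, SetLike.mem_coe,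
      LinearMap.mem_ker, map_add, map_sub, map_smul, ee, Fintype.linearCombination_apply_single]
    simp only [smul_eq_mul, one_mul, Matrix.cons_val]
    exact ⟨by ring, by linear_combination z1_mul_z2, by ring, by linear_combination z1_mul_th2,
      by ring, by linear_combination z2_mul_th1, th1_mul_self, by linear_combination th1_mul_th2⟩

def omegaEmbed : M →ₗ[Polynomial ℂ] LaurentDual :=
  nodeEmbedCt.toLinearMap ∘ₗ omegaToANode.restrictScalars (Polynomial ℂ)

theorem omegaEmbed_smul (a : ANode) (x : M) :
    omegaEmbed (a • x) = nodeEmbed a * omegaEmbed x := by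
  simp [omegaEmbed, nodeEmbedCt]

theorem omegaEmbed_s (j : Fin 3) : omegaEmbed (s j) = nodeEmbed (![z1, tb, th1] j) := by
  simp [omegaEmbed, nodeEmbedCt, omegaToANode, s, ee]

def basisIndex : BasisIdx → ℤ ⊕ ℤ
  | .inl _ => .inr 1
  | .inr (.inl n) => .inl ((n + 1 : ℕ) : ℤ)
  | .inr (.inr (.inl n)) => .inl (-n)
  | .inr (.inr (.inr (.inl n))) => .inr ((n + 2 : ℕ) : ℤ)
  | .inr (.inr (.inr (.inr n))) => .inr (-n)

def basisCoeff : BasisIdx → Polynomial ℂ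
  | .inr (.inr (.inl n)) => (-Polynomial.X ^ 2) ^ n * Polynomial.X
  | .inr (.inr (.inr (.inr n))) => (-Polynomial.X ^ 2) ^ n * Polynomial.X ^ 2
  | _ => 1

theorem omegaEmbed_mBasis (i : BasisIdx) :
    omegaEmbed (mBasis i) = basisCoeff i • laurentBasis (basisIndex i) := by
  rcases i with _ | n | n | n | n <;>
    simp only [mBasis, basisCoeff, basisIndex, omegaEmbed_smul, omegaEmbed_s, map_mul, map_pow,
      laurentBasis_inl, laurentBasis_inr, laurentT_natCast, laurentT_neg_natCast, Algebra.smul_def,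
      map_neg, map_one, tb, z1, z2, th1, th2, nodeEmbed_mk_X, nodePoint, Matrix.cons_val] <;>
    ring

theorem basisIndex_injective : Function.Injective basisIndex := by
  rintro (_ | m | m | m | m) (_ | n | n | n | n) h <;> simp [basisIndex] at h ⊢ <;> omega

theorem basisCoeff_ne_zero (i : BasisIdx) : basisCoeff i ≠ 0 := by
  rcases i with _ | n | n | n | n <;> simp [basisCoeff, Polynomial.X_ne_zero]

theorem linearIndependent_mBasis : LinearIndependent (Polynomial ℂ) mBasis := by
  refine LinearIndependent.of_comp omegaEmbed ?_
  rw [show omegaEmbed ∘ mBasis = basisCoeff • (laurentBasis ∘ basisIndex) from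
    funext omegaEmbed_mBasis]
  exact (laurentBasis.linearIndependent.comp _ basisIndex_injective).smul_of_ne_zero
    basisCoeff_ne_zero

/-- the local model `M` of `ω_{X/S}` is a free `ℂ[t]`-module with basis
`z̄₁ⁿ·s₁, z̄₂ⁿ·s₂, z̄₁ⁿθ̄₁·s₁, z̄₂ⁿθ̄₂·s₂ (n ≥ 0)` together with `s₀`. -/
theorem omegaModule_free_over_Ct :
    LinearIndependent (Polynomial ℂ) mBasis ∧
      Submodule.span (Polynomial ℂ) (Set.range mBasis) = ⊤ := by
  exact ⟨linearIndependent_mBasis, span_mBasis_eq_top⟩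

end
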